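/- (Optimality condition IV) A vector x ∈ D ∩ dom f is a solution of problem (P) if and only if 0 ∈ conv{v_k* : k ∈ Θ(x)} + cone{x_i* : i ∈ I(x)} + cone{u_j* : j ∈ J(x)} + (ker A ∩ ker B)^⊥, where Θ(x) = {k : ⟨v_k*, x⟩ + β_k = f(x)}, I(x) = {i ∈ {1,…,p} : ⟨x_i*, x⟩ = α_i}, and J(x) = {j ∈ {1,…,q} : ⟨u_j*, x⟩ = γ_j}. -/

import Mathlib

/-!
Sufficiency is the subgradient inequality: evaluating the identity `0 = φ + ψ + θ` at `u - x`
gives `f u - f x ≥ φ (u - x) ≥ 0`, because the active constraint functionals generating the cone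
of `ψ` are nonpositive at `u - x`, and `θ` vanishes at `u - x ∈ ker A ∩ ker B`.

Necessity: at a minimizer there is no direction `w ∈ ker A ∩ ker B` on which every active
affine piece of `f` strictly decreases while the active constraints stay satisfied, since a
small step along `w` would remain feasible and decrease `f`. The multipliers then come from
Motzkin's transposition theorem. Through `w ↦ (⟨vₖ, w⟩, ⟨xsᵢ, w⟩, ⟨usⱼ, w⟩)` it reduces to a
subspace `V` of `ℝⁿ`, where it is Farkas separation of a point from the cone `V + ℝⁿ₊`. That
cone is closed: by Carathéodory's theorem for cones, every finitely generated cone is a finite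
union of images of orthants under injective linear maps.
-/

open scoped Pointwise

/-- The convex cone generated by a set (all finite nonnegative combinations, including `0`). -/
def coneGen {E : Type*} [AddCommGroup E] [Module ℝ E] (s : Set E) : Set E :=
  {y | ∃ (n : ℕ) (c : Fin n → ℝ) (w : Fin n → E),
    (∀ i, 0 ≤ c i) ∧ (∀ i, w i ∈ s) ∧ y = ∑ i, c i • w i}

lemma coneGen_eq_hull {E : Type*} [AddCommGroup E] [Module ℝ E] (s : Set E) :
    coneGen s = PointedCone.hull ℝ s := by
  ext x
  rw [SetLike.mem_coe, Submodule.mem_span_set']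
  constructor
  · rintro ⟨n, c, w, hc, hw, rfl⟩
    exact ⟨n, fun i => ⟨c i, hc i⟩, fun i => ⟨w i, hw i⟩, rfl⟩
  · rintro ⟨n, c, w, rfl⟩
    exact ⟨n, fun i => c i, fun i => w i, fun i => (c i).2, fun i => (w i).2, rfl⟩

lemma coneGen_add_coneGen {E : Type*} [AddCommGroup E] [Module ℝ E] (s t : Set E) :
    coneGen s + coneGen t = coneGen (s ∪ t) := by
  rw [coneGen_eq_hull, coneGen_eq_hull, coneGen_eq_hull, ← Submodule.coe_sup]
  exact congrArg _ (Submodule.span_union s t).symm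

lemma exists_sub_mul_nonneg_and_eq_zero {ι : Type*} {t : Finset ι} {c g : ι → ℝ}
    (hc : ∀ i ∈ t, 0 ≤ c i) (hg : ∃ i ∈ t, 0 < g i) :
    ∃ r : ℝ, (∀ i ∈ t, 0 ≤ c i - r * g i) ∧ ∃ i₀ ∈ t, c i₀ - r * g i₀ = 0 := by
  obtain ⟨i₀, hi₀, hmin⟩ := Finset.exists_min_image (t.filter (0 < g ·)) (fun i => c i / g i)
    (by obtain ⟨i, hi, hgi⟩ := hg; exact ⟨i, Finset.mem_filter.mpr ⟨hi, hgi⟩⟩)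
  obtain ⟨hi₀t, hgi₀⟩ := Finset.mem_filter.mp hi₀
  refine ⟨c i₀ / g i₀, fun i hi => ?_, i₀, hi₀t, by rw [div_mul_cancel₀ _ hgi₀.ne', sub_self]⟩
  rcases le_or_gt (g i) 0 with hgi | hgi
  · nlinarith [hc i hi, div_nonneg (hc i₀ hi₀t) hgi₀.le]
  · have := hmin i (Finset.mem_filter.mpr ⟨hi, hgi⟩)
    rw [div_le_div_iff₀ hgi₀ hgi] at this
    rw [div_mul_eq_mul_div, sub_nonneg, div_le_iff₀ hgi₀]
    linarith

namespace PointedCone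

variable {E : Type*} [AddCommGroup E] [Module ℝ E]

lemma sum_smul_mem_hull {ι : Type*} {s : Set E} {t : Finset ι} {c : ι → ℝ} {w : ι → E}
    (hc : ∀ i ∈ t, 0 ≤ c i) (hw : ∀ i ∈ t, w i ∈ s) : ∑ i ∈ t, c i • w i ∈ hull ℝ s :=
  Submodule.sum_mem _ fun i hi => (hull ℝ s).smul_mem (hc i hi) (subset_hull (hw i hi))

lemma mem_hull_finset_iff {s : Finset E} {x : E} :
    x ∈ hull ℝ (s : Set E) ↔ ∃ c : E → ℝ, (∀ a ∈ s, 0 ≤ c a) ∧ ∑ a ∈ s, c a • a = x := by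
  constructor
  · intro hx
    obtain ⟨c, -, rfl⟩ := Submodule.mem_span_finset.mp hx
    exact ⟨fun a => c a, fun a _ => (c a).2, rfl⟩
  · rintro ⟨c, hc, rfl⟩
    exact sum_smul_mem_hull hc fun a ha => ha

lemma exists_mem_hull_erase_of_not_linearIndepOn [DecidableEq E] {s : Finset E} {x : E}
    (hs : ¬LinearIndepOn ℝ id (s : Set E)) (hx : x ∈ hull ℝ (s : Set E)) :
    ∃ a ∈ s, x ∈ hull ℝ (s.erase a : Set E) := by
  obtain ⟨c, hc, rfl⟩ := mem_hull_finset_iff.mp hx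
  obtain ⟨g, hg, a, ha, hga⟩ : ∃ g : E → ℝ, ∑ b ∈ s, g b • b = 0 ∧ ∃ a ∈ s, 0 < g a := by
    simp only [linearIndepOn_finset_iff, id, not_forall] at hs
    obtain ⟨g, hg, a, ha, hga⟩ := hs
    rcases lt_or_gt_of_ne hga with hneg | hpos
    · exact ⟨-g, by simp [neg_smul, Finset.sum_neg_distrib, hg], a, ha, by simpa using hneg⟩
    · exact ⟨g, hg, a, ha, hpos⟩
  obtain ⟨r, hnonneg, a₀, ha₀, hzero⟩ := exists_sub_mul_nonneg_and_eq_zero hc ⟨a, ha, hga⟩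
  have hsum : ∑ b ∈ s, c b • b = ∑ b ∈ s.erase a₀, (c b - r * g b) • b := by
    rw [Finset.sum_erase _ (by rw [hzero, zero_smul])]
    simp only [sub_smul, mul_smul, Finset.sum_sub_distrib, ← Finset.smul_sum, hg, smul_zero,
      sub_zero]
  rw [hsum]
  exact ⟨a₀, ha₀, mem_hull_finset_iff.mpr
    ⟨_, fun b hb => hnonneg b (Finset.mem_of_mem_erase hb), rfl⟩⟩

theorem exists_linearIndepOn_of_mem_hull {s : Finset E} {x : E} (hx : x ∈ hull ℝ (s : Set E)) :
    ∃ t ⊆ s, LinearIndepOn ℝ id (t : Set E) ∧ x ∈ hull ℝ (t : Set E) := by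
  classical
  induction s using Finset.strongInduction with
  | H s ih =>
    by_cases hs : LinearIndepOn ℝ id (s : Set E)
    · exact ⟨s, subset_rfl, hs, hx⟩
    obtain ⟨a, ha, hxa⟩ := exists_mem_hull_erase_of_not_linearIndepOn hs hx
    obtain ⟨t, hts, ht, hxt⟩ := ih _ (Finset.erase_ssubset ha) hxa
    exact ⟨t, hts.trans (Finset.erase_subset a s), ht, hxt⟩

variable [TopologicalSpace E] [IsTopologicalAddGroup E] [ContinuousSMul ℝ E] [T2Space E]

lemma isClosed_hull_of_linearIndepOn {t : Finset E} (ht : LinearIndepOn ℝ id (t : Set E)) :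
    IsClosed (hull ℝ (t : Set E) : Set E) := by
  let L := Fintype.linearCombination ℝ (Subtype.val : t → E)
  have hL : Topology.IsClosedEmbedding L := LinearMap.isClosedEmbedding_of_injective
    (LinearMap.ker_eq_bot.mpr (linearIndependent_iff_injective_fintypeLinearCombination.mp ht))
  have hhull : (hull ℝ (t : Set E) : Set E) = L '' Set.Ici 0 := by
    ext x
    constructor
    · intro hx
      obtain ⟨c, hc, rfl⟩ := mem_hull_finset_iff.mp hx
      refine ⟨fun a => c a, fun a => hc a a.2, ?_⟩
      simp only [L, Fintype.linearCombination_apply]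
      exact Finset.sum_coe_sort t (fun a => c a • a)
    · rintro ⟨c, hc, rfl⟩
      rw [Fintype.linearCombination_apply]
      exact sum_smul_mem_hull (fun a _ => hc a) fun a _ => a.2
  rw [hhull]
  exact hL.isClosedMap _ isClosed_Ici

theorem isClosed_of_fg {C : PointedCone ℝ E} (hC : C.FG) : IsClosed (C : Set E) := by
  classical
  obtain ⟨s, rfl⟩ := hC
  have hunion : (hull ℝ (s : Set E) : Set E) =
      ⋃ t ∈ s.powerset.filter (fun t : Finset E => LinearIndepOn ℝ id (t : Set E)),
        (hull ℝ (t : Set E) : Set E) := by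
    ext x
    simp only [Set.mem_iUnion, Finset.mem_filter, Finset.mem_powerset, SetLike.mem_coe,
      exists_prop]
    constructor
    · intro hx
      obtain ⟨t, hts, ht, hxt⟩ := exists_linearIndepOn_of_mem_hull hx
      exact ⟨t, ⟨hts, ht⟩, hxt⟩
    · rintro ⟨t, ⟨hts, -⟩, hxt⟩
      exact Submodule.span_mono (by exact_mod_cast hts) hxt
  rw [hunion]
  exact isClosed_biUnion_finset fun t ht =>
    isClosed_hull_of_linearIndepOn (Finset.mem_filter.mp ht).2

end PointedCone

open Matrix in
theorem motzkin_transposition_pi {ι₁ ι₂ : Type*} [Fintype ι₁] [Fintype ι₂]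
    (V : Submodule ℝ (ι₁ ⊕ ι₂ → ℝ))
    (h : ¬∃ y ∈ V, (∀ k, y (.inl k) < 0) ∧ ∀ i, y (.inr i) ≤ 0) :
    ∃ η : ι₁ ⊕ ι₂ → ℝ, 0 ≤ η ∧ ∑ k, η (.inl k) = 1 ∧ ∀ y ∈ V, η ⬝ᵥ y = 0 := by
  classical
  let e : ι₁ ⊕ ι₂ → ι₁ ⊕ ι₂ → ℝ := fun j => Pi.single j 1
  let C : PointedCone ℝ (ι₁ ⊕ ι₂ → ℝ) :=
    PointedCone.ofSubmodule V ⊔ PointedCone.hull ℝ (Set.range e)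
  have hC : C.FG := (IsNoetherian.noetherian V).restrictScalars.sup
    (Submodule.fg_span (Set.finite_range e))
  let x₀ : ι₁ ⊕ ι₂ → ℝ := Sum.elim (fun _ => -1) 0
  have hx₀ : x₀ ∉ C := by
    intro hx
    obtain ⟨y, hy, g, hg, hyg⟩ := Submodule.mem_sup.mp hx
    have hg0 : 0 ≤ g := (PointedCone.mem_positive ℝ _).mp <| Submodule.span_le.mpr
      (Set.range_subset_iff.mpr fun j => (PointedCone.mem_positive ℝ _).mpr
        (Pi.single_nonneg.mpr zero_le_one)) hg
    have hyx : y ≤ x₀ := hyg ▸ le_add_of_nonneg_right hg0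
    exact h ⟨y, hy, fun k => (hyx (.inl k)).trans_lt (by simp [x₀]),
      fun i => (hyx (.inr i)).trans (by simp [x₀])⟩
  obtain ⟨f, hfC, hfx₀⟩ :=
    ProperCone.hyperplane_separation_point ⟨C, PointedCone.isClosed_of_fg hC⟩ hx₀
  let η := fun j => f (e j)
  have hf : ∀ y, f y = η ⬝ᵥ y := fun y => by
    conv_lhs => rw [pi_eq_sum_univ' y]
    simp [map_sum, dotProduct, mul_comm, η, e]
  have hη : 0 ≤ η := fun j => hfC _ (Submodule.mem_sup_right (PointedCone.subset_hull ⟨j, rfl⟩))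
  have hηV : ∀ y ∈ V, η ⬝ᵥ y = 0 := fun y hy => by
    rw [← hf]
    refine le_antisymm ?_ (hfC _ (Submodule.mem_sup_left hy))
    simpa using hfC _ (Submodule.mem_sup_left (V.neg_mem hy))
  have hS : 0 < ∑ k, η (.inl k) := by
    rw [hf] at hfx₀
    simpa [dotProduct, Fintype.sum_sum_type, x₀] using hfx₀
  refine ⟨(∑ k, η (.inl k))⁻¹ • η, smul_nonneg (inv_nonneg.mpr hS.le) hη, ?_,
    fun y hy => by rw [smul_dotProduct, hηV y hy, smul_zero]⟩
  simp only [Pi.smul_apply, smul_eq_mul, ← Finset.mul_sum]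
  exact inv_mul_cancel₀ hS.ne'

theorem motzkin_transposition {X ι₁ ι₂ : Type*} [AddCommGroup X] [Module ℝ X]
    [Fintype ι₁] [Fintype ι₂] (W : Submodule ℝ X) (a : ι₁ → Module.Dual ℝ X)
    (b : ι₂ → Module.Dual ℝ X) (h : ¬∃ w ∈ W, (∀ k, a k w < 0) ∧ ∀ i, b i w ≤ 0) :
    ∃ (ξ : ι₁ → ℝ) (ζ : ι₂ → ℝ), 0 ≤ ξ ∧ 0 ≤ ζ ∧ ∑ k, ξ k = 1 ∧
      ∀ w ∈ W, ∑ k, ξ k * a k w + ∑ i, ζ i * b i w = 0 := by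
  let T : X →ₗ[ℝ] ι₁ ⊕ ι₂ → ℝ := LinearMap.pi (Sum.elim a b)
  obtain ⟨η, hη, hη₁, hηW⟩ := motzkin_transposition_pi (W.map T)
    fun ⟨_, ⟨w, hw, hTw⟩, hk, hi⟩ => h ⟨w, hw, by simpa [← hTw, T] using And.intro hk hi⟩
  refine ⟨fun k => η (.inl k), fun i => η (.inr i), fun k => hη _, fun i => hη _, hη₁, ?_⟩
  intro w hw
  simpa [dotProduct, Fintype.sum_sum_type, T, mul_comm] using hηW (T w) ⟨w, hw, rfl⟩

open Filter Topology

lemma eventually_nhdsGT_add_mul_lt {a b c : ℝ} (hac : a ≤ c) (hb : a = c → b < 0) :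
    ∀ᶠ t in 𝓝[>] 0, a + t * b < c := by
  rcases hac.lt_or_eq with hlt | rfl
  · have hcont : Continuous fun t : ℝ => a + t * b := by fun_prop
    exact nhdsWithin_le_nhds (hcont.tendsto' 0 a (by simp) |>.eventually (gt_mem_nhds hlt))
  · filter_upwards [self_mem_nhdsWithin] with t (ht : 0 < t)
    nlinarith [hb rfl]

lemma eventually_nhdsGT_add_mul_le {a b c : ℝ} (hac : a ≤ c) (hb : a = c → b ≤ 0) :
    ∀ᶠ t in 𝓝[>] 0, a + t * b ≤ c := by
  rcases hac.lt_or_eq with hlt | rfl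
  · exact (eventually_nhdsGT_add_mul_lt hac fun h => absurd h hlt.ne).mono fun _ => le_of_lt
  · filter_upwards [self_mem_nhdsWithin] with t (ht : 0 < t)
    nlinarith [hb rfl]

lemma forall_le_iff_isMinOn_inter {X : Type*} {f : X → EReal} {F : X → ℝ} {D S : Set X}
    (hf : ∀ u ∈ S, f u = F u) (hf' : ∀ u ∉ S, f u = ⊤) {x : X} (hx : x ∈ S) :
    (∀ u ∈ D, f x ≤ f u) ↔ IsMinOn F (D ∩ S) x := by
  rw [isMinOn_iff]
  refine ⟨fun h u hu => ?_, fun h u huD => ?_⟩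
  · simpa [hf x hx, hf u hu.2] using h u hu.1
  · by_cases huS : u ∈ S
    · simpa [hf x hx, hf u huS] using h u ⟨huD, huS⟩
    · simp [hf' u huS]

section Polyhedral

variable {X Y ι κ : Type*} [AddCommGroup X] [Module ℝ X] [TopologicalSpace X]
  [AddCommGroup Y] [Module ℝ Y] [TopologicalSpace Y]

def polyhedron (L : X →L[ℝ] Y) (y : Y) (g : κ → X →L[ℝ] ℝ) (c : κ → ℝ) : Set X :=
  {u | L u = y ∧ ∀ i, g i u ≤ c i}

def maxAffine [Fintype ι] [Nonempty ι] (v : ι → X →L[ℝ] ℝ) (β : ι → ℝ) (u : X) : ℝ :=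
  Finset.univ.sup' Finset.univ_nonempty fun k => v k u + β k

lemma polyhedron_inter_polyhedron {Z κ' : Type*} [AddCommGroup Z] [Module ℝ Z] [TopologicalSpace Z]
    (L : X →L[ℝ] Y) (y : Y) (g : κ → X →L[ℝ] ℝ) (c : κ → ℝ)
    (L' : X →L[ℝ] Z) (z : Z) (g' : κ' → X →L[ℝ] ℝ) (c' : κ' → ℝ) :
    polyhedron L y g c ∩ polyhedron L' z g' c' =
      polyhedron (L.prod L') (y, z) (Sum.elim g g') (Sum.elim c c') := by
  ext u
  simp only [polyhedron, Set.mem_inter_iff, Set.mem_ofPred_eq, ContinuousLinearMap.prod_apply,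
    Prod.mk.injEq, Sum.forall, Sum.elim_inl, Sum.elim_inr]
  tauto

lemma eventually_add_smul_mem_polyhedron [Finite κ] {L : X →L[ℝ] Y} {y : Y}
    {g : κ → X →L[ℝ] ℝ} {c : κ → ℝ} {x w : X} (hx : x ∈ polyhedron L y g c) (hw : L w = 0)
    (hgw : ∀ i, g i x = c i → g i w ≤ 0) :
    ∀ᶠ t in 𝓝[>] (0 : ℝ), x + t • w ∈ polyhedron L y g c := by
  filter_upwards [eventually_all.mpr fun i => eventually_nhdsGT_add_mul_le (hx.2 i) (hgw i)]
    with t ht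
  exact ⟨by simp [hx.1, hw], fun i => by simpa using ht i⟩

section MaxAffine

variable [Fintype ι] [Nonempty ι] {v : ι → X →L[ℝ] ℝ} {β : ι → ℝ}

lemma le_maxAffine (k : ι) (u : X) : v k u + β k ≤ maxAffine v β u :=
  Finset.le_sup' (fun k => v k u + β k) (Finset.mem_univ k)

lemma eventually_maxAffine_add_smul_lt {x w : X}
    (hw : ∀ k, v k x + β k = maxAffine v β x → v k w < 0) :
    ∀ᶠ t in 𝓝[>] (0 : ℝ), maxAffine v β (x + t • w) < maxAffine v β x := by
  filter_upwards [eventually_all.mpr fun k =>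
    eventually_nhdsGT_add_mul_lt (le_maxAffine k x) (hw k)] with t ht
  refine (Finset.sup'_lt_iff _).mpr fun k _ => ?_
  simpa [add_right_comm] using ht k

lemma apply_sub_le_maxAffine_sub {x u : X} {φ : X →L[ℝ] ℝ}
    (hφ : φ ∈ convexHull ℝ {ψ | ∃ k, v k x + β k = maxAffine v β x ∧ ψ = v k}) :
    φ (u - x) ≤ maxAffine v β u - maxAffine v β x := by
  refine convexHull_min ?_ (convex_halfSpace_le (f := fun ψ : X →L[ℝ] ℝ => ψ (u - x))
    ⟨fun _ _ => rfl, fun _ _ => rfl⟩ _) hφ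
  rintro _ ⟨k, hk, rfl⟩
  simp only [Set.mem_ofPred_eq, map_sub]
  linarith [le_maxAffine (v := v) (β := β) k u]

end MaxAffine

lemma apply_nonpos_of_mem_hull {S : Set (X →L[ℝ] ℝ)} {d : X} (hS : ∀ φ ∈ S, φ d ≤ 0)
    {ψ : X →L[ℝ] ℝ} (hψ : ψ ∈ PointedCone.hull ℝ S) : ψ d ≤ 0 := by
  induction hψ using Submodule.span_induction with
  | mem φ hφ => exact hS φ hφ
  | zero => simp
  | add φ ψ _ _ hφ hψ => simpa using add_nonpos hφ hψ
  | smul c φ _ hφ =>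
    rw [← Nonneg.coe_smul, smul_apply, smul_eq_mul]
    exact mul_nonpos_of_nonneg_of_nonpos c.2 hφ

lemma not_exists_descent_of_isMinOn [Fintype ι] [Nonempty ι] [Finite κ] {v : ι → X →L[ℝ] ℝ}
    {β : ι → ℝ} {L : X →L[ℝ] Y} {y : Y} {g : κ → X →L[ℝ] ℝ} {c : κ → ℝ} {x : X}
    (hx : x ∈ polyhedron L y g c) (hmin : IsMinOn (maxAffine v β) (polyhedron L y g c) x) :
    ¬∃ w, L w = 0 ∧ (∀ k, v k x + β k = maxAffine v β x → v k w < 0) ∧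
      ∀ i, g i x = c i → g i w ≤ 0 := by
  rintro ⟨w, hw, hv, hg⟩
  obtain ⟨t, htP, htF⟩ :=
    ((eventually_add_smul_mem_polyhedron hx hw hg).and (eventually_maxAffine_add_smul_lt hv)).exists
  exact htF.not_ge (isMinOn_iff.mp hmin _ htP)

theorem isMinOn_maxAffine_polyhedron_iff [Fintype ι] [Nonempty ι] [Fintype κ]
    (v : ι → X →L[ℝ] ℝ) (β : ι → ℝ) (L : X →L[ℝ] Y) (y : Y) (g : κ → X →L[ℝ] ℝ) (c : κ → ℝ)
    {x : X} (hx : x ∈ polyhedron L y g c) :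
    IsMinOn (maxAffine v β) (polyhedron L y g c) x ↔
      (0 : X →L[ℝ] ℝ) ∈ convexHull ℝ {φ | ∃ k, v k x + β k = maxAffine v β x ∧ φ = v k} +
        (PointedCone.hull ℝ {φ | ∃ i, g i x = c i ∧ φ = g i} : Set (X →L[ℝ] ℝ)) +
        {φ | ∀ u, L u = 0 → φ u = 0} := by
  constructor
  · intro hmin
    obtain ⟨ξ, ζ, hξ, hζ, hξ₁, hann⟩ := motzkin_transposition (LinearMap.ker (L : X →ₗ[ℝ] Y))
      (fun k : {k // v k x + β k = maxAffine v β x} => (v k : X →ₗ[ℝ] ℝ))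
      (fun i : {i // g i x = c i} => (g i : X →ₗ[ℝ] ℝ))
      fun ⟨w, hw, hv, hg⟩ => not_exists_descent_of_isMinOn hx hmin
        ⟨w, hw, fun k hk => hv ⟨k, hk⟩, fun i hi => hg ⟨i, hi⟩⟩
    set φ := ∑ k, ξ k • v k
    set ψ := ∑ i, ζ i • g i
    have hφ : φ ∈ convexHull ℝ {φ | ∃ k, v k x + β k = maxAffine v β x ∧ φ = v k} :=
      (convex_convexHull ℝ _).sum_mem (fun k _ => hξ k) hξ₁
        fun k _ => subset_convexHull ℝ _ ⟨k, k.2, rfl⟩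
    have hψ : ψ ∈ PointedCone.hull ℝ {φ | ∃ i, g i x = c i ∧ φ = g i} :=
      PointedCone.sum_smul_mem_hull (fun i _ => hζ i) fun i _ => ⟨i, i.2, rfl⟩
    have hφψ : -(φ + ψ) ∈ {φ : X →L[ℝ] ℝ | ∀ u, L u = 0 → φ u = 0} := fun u hu => by
      have h := hann u hu
      simp only [ContinuousLinearMap.coe_coe] at h
      simp [φ, ψ]
      linarith
    simpa using Set.add_mem_add (Set.add_mem_add hφ hψ) hφψ
  · simp only [Set.mem_add]
    rintro ⟨_, ⟨φ, hφ, ψ, hψ, rfl⟩, θ, hθ, h0⟩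
    refine isMinOn_iff.mpr fun u hu => ?_
    have hψu : ψ (u - x) ≤ 0 := apply_nonpos_of_mem_hull
      (by rintro _ ⟨i, hi, rfl⟩; simpa [hi] using hu.2 i) hψ
    have hθu : θ (u - x) = 0 := hθ _ (by simp [hu.1, hx.1])
    have hsum : φ (u - x) + ψ (u - x) + θ (u - x) = 0 := by
      simpa using congr($h0 (u - x))
    linarith [apply_sub_le_maxAffine_sub (u := u) hφ]

end Polyhedral

theorem optimality_condition_IV_general
    {X Y Z : Type*}
    [AddCommGroup X] [Module ℝ X] [TopologicalSpace X]
    [AddCommGroup Y] [Module ℝ Y] [TopologicalSpace Y]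
    [AddCommGroup Z] [Module ℝ Z] [TopologicalSpace Z]
    (A : X →L[ℝ] Y) (y : Y) (p : ℕ) (xs : Fin p → X →L[ℝ] ℝ) (α : Fin p → ℝ)
    (B : X →L[ℝ] Z) (z : Z) (q : ℕ) (us : Fin q → X →L[ℝ] ℝ) (γs : Fin q → ℝ)
    (m : ℕ) (v : Fin (m + 1) → X →L[ℝ] ℝ) (β : Fin (m + 1) → ℝ)
    (D : Set X) (hD : D = {x | A x = y ∧ ∀ i, xs i x ≤ α i})
    (domf : Set X) (hdomf : domf = {x | B x = z ∧ ∀ j, us j x ≤ γs j})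
    (f : X → EReal)
    (hf : ∀ x ∈ domf,
      f x = ((Finset.univ.sup' Finset.univ_nonempty fun k => v k x + β k : ℝ) : EReal))
    (hf' : ∀ x ∉ domf, f x = ⊤)
    (x : X) (hxD : x ∈ D) (hxdom : x ∈ domf) :
    (∀ u ∈ D, f x ≤ f u) ↔
      (0 : X →L[ℝ] ℝ) ∈
        convexHull ℝ {w : X →L[ℝ] ℝ | ∃ k, ((v k x + β k : ℝ) : EReal) = f x ∧ w = v k} +
          coneGen {w : X →L[ℝ] ℝ | ∃ i, xs i x = α i ∧ w = xs i} +
          coneGen {w : X →L[ℝ] ℝ | ∃ j, us j x = γs j ∧ w = us j} +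
          {φ : X →L[ℝ] ℝ | ∀ u : X, A u = 0 → B u = 0 → φ u = 0} := by
  have hP : D ∩ domf = polyhedron (A.prod B) (y, z) (Sum.elim xs us) (Sum.elim α γs) := by
    rw [hD, hdomf]
    exact polyhedron_inter_polyhedron A y xs α B z us γs
  have hactive : {w : X →L[ℝ] ℝ | ∃ k, ((v k x + β k : ℝ) : EReal) = f x ∧ w = v k} =
      {w | ∃ k, v k x + β k = maxAffine v β x ∧ w = v k} := by
    simp only [hf x hxdom, EReal.coe_eq_coe_iff]
    rfl
  have hcone : coneGen {w : X →L[ℝ] ℝ | ∃ i, xs i x = α i ∧ w = xs i} +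
      coneGen {w | ∃ j, us j x = γs j ∧ w = us j} = PointedCone.hull ℝ
        {w | ∃ i, Sum.elim xs us i x = Sum.elim α γs i ∧ w = Sum.elim xs us i} := by
    rw [coneGen_add_coneGen, coneGen_eq_hull]
    congr 2
    ext w
    simp [Sum.exists]
  have hker : {φ : X →L[ℝ] ℝ | ∀ u : X, A u = 0 → B u = 0 → φ u = 0} =
      {φ | ∀ u, A.prod B u = 0 → φ u = 0} := by
    simp [Prod.ext_iff]
  rw [forall_le_iff_isMinOn_inter (F := maxAffine v β) hf hf' hxdom, hP, hactive,
    add_assoc (convexHull ℝ _), hcone, hker]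
  exact isMinOn_maxAffine_polyhedron_iff v β _ _ _ _ (hP ▸ ⟨hxD, hxdom⟩)

/-- **Optimality condition IV.**  With `D = {x | A x = y ∧ ⟨xsᵢ, x⟩ ≤ αᵢ}` nonempty and `f`
proper generalized polyhedral convex, `dom f = {x | B x = z ∧ ⟨usⱼ, x⟩ ≤ γsⱼ}`,
`f = max {⟨vₖ, ·⟩ + βₖ}` on `dom f`: a point `x ∈ D ∩ dom f` solves `(P)` iff
`0 ∈ conv {vₖ : k ∈ Θ(x)} + cone {xsᵢ : i ∈ I(x)} + cone {usⱼ : j ∈ J(x)}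
   + (ker A ∩ ker B)^⊥`,
where `Θ(x), I(x), J(x)` are the active index sets at `x`. -/
theorem optimality_condition_IV
    {X Y Z : Type*}
    [AddCommGroup X] [Module ℝ X] [TopologicalSpace X] [IsTopologicalAddGroup X]
    [ContinuousSMul ℝ X] [LocallyConvexSpace ℝ X] [T2Space X]
    [AddCommGroup Y] [Module ℝ Y] [TopologicalSpace Y] [IsTopologicalAddGroup Y]
    [ContinuousSMul ℝ Y] [LocallyConvexSpace ℝ Y] [T2Space Y]
    [AddCommGroup Z] [Module ℝ Z] [TopologicalSpace Z] [IsTopologicalAddGroup Z]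
    [ContinuousSMul ℝ Z] [LocallyConvexSpace ℝ Z] [T2Space Z]
    (A : X →L[ℝ] Y) (y : Y) (p : ℕ) (xs : Fin p → X →L[ℝ] ℝ) (α : Fin p → ℝ)
    (B : X →L[ℝ] Z) (z : Z) (q : ℕ) (us : Fin q → X →L[ℝ] ℝ) (γs : Fin q → ℝ)
    (m : ℕ) (v : Fin (m + 1) → X →L[ℝ] ℝ) (β : Fin (m + 1) → ℝ)
    (D : Set X) (hD : D = {x | A x = y ∧ ∀ i, xs i x ≤ α i})
    (domf : Set X) (hdomf : domf = {x | B x = z ∧ ∀ j, us j x ≤ γs j})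
    (hdomne : domf.Nonempty)
    (f : X → EReal)
    (hf : ∀ x ∈ domf,
      f x = ((Finset.univ.sup' Finset.univ_nonempty fun k => v k x + β k : ℝ) : EReal))
    (hf' : ∀ x ∉ domf, f x = ⊤)
    (x : X) (hxD : x ∈ D) (hxdom : x ∈ domf) :
    (∀ u ∈ D, f x ≤ f u) ↔
      (0 : X →L[ℝ] ℝ) ∈
        convexHull ℝ {w : X →L[ℝ] ℝ | ∃ k, ((v k x + β k : ℝ) : EReal) = f x ∧ w = v k} +
          coneGen {w : X →L[ℝ] ℝ | ∃ i, xs i x = α i ∧ w = xs i} +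
          coneGen {w : X →L[ℝ] ℝ | ∃ j, us j x = γs j ∧ w = us j} +
          {φ : X →L[ℝ] ℝ | ∀ u : X, A u = 0 → B u = 0 → φ u = 0} :=
  optimality_condition_IV_general A y p xs α B z q us γs m v β D hD domf hdomf f hf hf' x hxD hxdom
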